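/- Let 𝒢 = (V, ℰ) be a temporal graph with k ≥ 1, and let [a,b] and [c,d] be time intervals such that each of the temporal k-cores 𝒯_{[a,b]}(𝒢) and 𝒯_{[c,d]}(𝒢) contains at least one temporal edge. If the minimum edge timestamp of 𝒯_{[a,b]}(𝒢) equals that of 𝒯_{[c,d]}(𝒢), and the maximum edge timestamp of 𝒯_{[a,b]}(𝒢) equals that of 𝒯_{[c,d]}(𝒢), then 𝒯_{[a,b]}(𝒢) = 𝒯_{[c,d]}(𝒢); i.e., a temporal k-core is uniquely identified by its tightest time interval. -/

import Mathlib

open scoped Classical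

noncomputable section

/-- A temporal graph on a vertex type `V`: a finite set of temporal edges
`(u, v, t)` with `u ≠ v`, symmetric in the two endpoints. -/
structure TemporalGraph (V : Type*) where
  E : Finset (V × V × ℕ)
  ne : ∀ e ∈ E, e.1 ≠ e.2.1
  symm : ∀ u v t, (u, v, t) ∈ E → (v, u, t) ∈ E

variable {V : Type*}

/-- The detemporalized (projected) simple graph of `G` over the interval `[ts, te]`. -/
def detemp (G : TemporalGraph V) (ts te : ℕ) : SimpleGraph V where
  Adj u v := ∃ t, ts ≤ t ∧ t ≤ te ∧ (u, v, t) ∈ G.E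
  symm := ⟨fun u v ⟨t, h1, h2, h3⟩ => ⟨t, h1, h2, G.symm u v t h3⟩⟩
  loopless := ⟨fun u ⟨_, _, _, h3⟩ => (G.ne _ h3) rfl⟩

/-- The detemporalized simple graph of `G` over all timestamps. -/
def detempAll (G : TemporalGraph V) : SimpleGraph V where
  Adj u v := ∃ t, (u, v, t) ∈ G.E
  symm := ⟨fun u v ⟨t, h3⟩ => ⟨t, G.symm u v t h3⟩⟩
  loopless := ⟨fun u ⟨_, h3⟩ => (G.ne _ h3) rfl⟩

/-- `S` is `k`-dense in the simple graph `G` if every vertex of `S` has at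
least `k` neighbors inside `S`. -/
def kDense (k : ℕ) (G : SimpleGraph V) (S : Set V) : Prop :=
  ∀ v ∈ S, k ≤ {u | u ∈ S ∧ G.Adj v u}.ncard

/-- `C_k(G)`: the union of all `k`-dense sets of `G`. -/
def coreSet (k : ℕ) (G : SimpleGraph V) : Set V :=
  ⋃₀ {S | kDense k G S}

/-- The projected temporal edge set of `G` over `[ts, te]`. -/
def projE (G : TemporalGraph V) (ts te : ℕ) : Finset (V × V × ℕ) :=
  G.E.filter fun e => ts ≤ e.2.2 ∧ e.2.2 ≤ te

/-- The vertex set of the temporal `k`-core of `G` over `[ts, te]`. -/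
def tcoreV (k : ℕ) (G : TemporalGraph V) (ts te : ℕ) : Set V :=
  coreSet k (detemp G ts te)

/-- The temporal edge set of the temporal `k`-core of `G` over `[ts, te]`. -/
def tcoreE (k : ℕ) (G : TemporalGraph V) (ts te : ℕ) : Finset (V × V × ℕ) :=
  (projE G ts te).filter fun e => e.1 ∈ tcoreV k G ts te ∧ e.2.1 ∈ tcoreV k G ts te

/-- The `k`-core time `σ_x(v, G)` of a vertex `v` w.r.t. start timestamp `x`,
in `ℕ∞` (it is `⊤` if no suitable timestamp exists). -/
def coreTime (k : ℕ) (G : TemporalGraph V) (x : ℕ) (v : V) : ℕ∞ :=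
  sInf ((fun t : ℕ => (t : ℕ∞)) '' {t | x ≤ t ∧ v ∈ tcoreV k G x t})

/-- The `k`-core time `σ_x(u, v, G)` of a pair `(u, v)` w.r.t. start timestamp `x`. -/
def edgeCoreTime (k : ℕ) (G : TemporalGraph V) (x : ℕ) (u v : V) : ℕ∞ :=
  sInf ((fun t : ℕ => (t : ℕ∞)) ''
    {t | x ≤ t ∧ u ∈ tcoreV k G x t ∧ v ∈ tcoreV k G x t ∧ (detemp G x t).Adj u v})

/-- The support time `Sup_x(u, v, G)`: the minimum timestamp `t ≥ x` with `(u, v, t) ∈ ℰ`. -/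
def supTime (G : TemporalGraph V) (x : ℕ) (u v : V) : ℕ∞ :=
  sInf ((fun t : ℕ => (t : ℕ∞)) '' {t | x ≤ t ∧ (u, v, t) ∈ G.E})

/-- The `k`-degree time `d_x(v, G)`: the minimum timestamp `t ≥ x` such that `v`
has at least `k` neighbors in the detemporalized graph over `[x, t]`. -/
def degTime (k : ℕ) (G : TemporalGraph V) (x : ℕ) (v : V) : ℕ∞ :=
  sInf ((fun t : ℕ => (t : ℕ∞)) '' {t | x ≤ t ∧ k ≤ ((detemp G x t).neighborSet v).ncard})

/-- The `k`-th smallest element of a multiset of values in `ℕ∞`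
(`⊤` if the multiset has fewer than `k` elements). -/
def kthSmallest (m : Multiset ℕ∞) (k : ℕ) : ℕ∞ :=
  (m.sort (· ≤ ·)).getD (k - 1) ⊤

end

/-!
The temporal `k`-core over `[a, b]` only uses temporal edges with timestamps in its tightest
interval `[ts*, te*] ⊆ [a, b]`. Hence its vertex set is already `k`-dense in `G_{[ts*, te*]}`,
while shrinking the interval can only shrink the core; so the core over `[a, b]` coincides with
the core over `[ts*, te*]`, and two cores with the same tightest interval are equal.
-/

section KDense

variable {V : Type*} {k : ℕ}

lemma kDense.mono {G H : SimpleGraph V} (hGH : G ≤ H) (hH : ∀ v, (H.neighborSet v).Finite)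
    {S : Set V} (hS : kDense k G S) : kDense k H S := fun v hv =>
  (hS v hv).trans <| Set.ncard_le_ncard (fun _ hu => ⟨hu.1, hGH hu.2⟩)
    ((hH v).subset fun _ hu => hu.2)

lemma kDense_coreSet {G : SimpleGraph V} (hG : ∀ v, (G.neighborSet v).Finite) :
    kDense k G (coreSet k G) := by
  rintro v ⟨S, hS, hvS⟩
  exact (hS v hvS).trans <| Set.ncard_le_ncard (fun u hu => ⟨⟨S, hS, hu.1⟩, hu.2⟩)
    ((hG v).subset fun _ hu => hu.2)

lemma kDense.subset_coreSet {G : SimpleGraph V} {S : Set V} (hS : kDense k G S) :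
    S ⊆ coreSet k G := fun _ hv => ⟨S, hS, hv⟩

end KDense

section TemporalCore

variable {V : Type*} {k : ℕ} {G : TemporalGraph V}

lemma detemp_mono {a b s t : ℕ} (has : a ≤ s) (htb : t ≤ b) : detemp G s t ≤ detemp G a b :=
  fun _ _ ⟨r, hsr, hrt, hr⟩ => ⟨r, has.trans hsr, hrt.trans htb, hr⟩

lemma detemp_neighborSet_finite (s t : ℕ) (v : V) : ((detemp G s t).neighborSet v).Finite :=
  (G.E.image fun e => e.2.1).finite_toSet.subset fun _ ⟨_, _, _, h⟩ =>
    Finset.mem_coe.2 (Finset.mem_image_of_mem _ h)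

lemma mem_tcoreE {a b : ℕ} {e : V × V × ℕ} :
    e ∈ tcoreE k G a b ↔ e ∈ G.E ∧ (a ≤ e.2.2 ∧ e.2.2 ≤ b) ∧
      e.1 ∈ tcoreV k G a b ∧ e.2.1 ∈ tcoreV k G a b := by
  simp only [tcoreE, projE, Finset.mem_filter, and_assoc]

lemma tcoreV_subset_of_interval_subset {a b s t : ℕ} (has : a ≤ s) (htb : t ≤ b) :
    tcoreV k G s t ⊆ tcoreV k G a b := fun _ ⟨S, hS, hv⟩ =>
  ⟨S, hS.mono (detemp_mono has htb) (detemp_neighborSet_finite a b), hv⟩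

theorem tcore_eq_of_timestamps_mem {a b s t : ℕ} (has : a ≤ s) (htb : t ≤ b)
    (hcore : ∀ e ∈ tcoreE k G a b, s ≤ e.2.2 ∧ e.2.2 ≤ t) :
    tcoreV k G s t = tcoreV k G a b ∧ tcoreE k G s t = tcoreE k G a b := by
  have hdense : kDense k (detemp G s t) (tcoreV k G a b) := by
    intro v hv
    refine (kDense_coreSet (detemp_neighborSet_finite a b) v hv).trans <|
      Set.ncard_le_ncard ?_ ((detemp_neighborSet_finite s t v).subset fun _ hu => hu.2)
    rintro u ⟨hu, r, har, hrb, hr⟩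
    obtain ⟨hsr, hrt⟩ := hcore _ (mem_tcoreE.2 ⟨hr, ⟨har, hrb⟩, hv, hu⟩)
    exact ⟨hu, r, hsr, hrt, hr⟩
  have hV : tcoreV k G s t = tcoreV k G a b :=
    (tcoreV_subset_of_interval_subset has htb).antisymm hdense.subset_coreSet
  refine ⟨hV, Finset.ext fun e => ?_⟩
  rw [mem_tcoreE, mem_tcoreE, hV]
  constructor
  · rintro ⟨hE, ⟨hse, het⟩, hu, hv⟩
    exact ⟨hE, ⟨has.trans hse, het.trans htb⟩, hu, hv⟩
  · intro he
    exact ⟨he.1, hcore e (mem_tcoreE.2 (hV ▸ he)), he.2.2⟩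

theorem tcore_eq_tcore_tightest {a b : ℕ} (hne : (tcoreE k G a b).Nonempty) :
    let times := (tcoreE k G a b).image fun e => e.2.2
    tcoreV k G (times.min' (hne.image _)) (times.max' (hne.image _)) = tcoreV k G a b ∧
      tcoreE k G (times.min' (hne.image _)) (times.max' (hne.image _)) = tcoreE k G a b := by
  intro times
  obtain ⟨emin, hemin, hmin⟩ := Finset.mem_image.1 (times.min'_mem (hne.image _))
  obtain ⟨emax, hemax, hmax⟩ := Finset.mem_image.1 (times.max'_mem (hne.image _))
  refine tcore_eq_of_timestamps_mem ?_ ?_ fun e he => ?_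
  · exact hmin ▸ (mem_tcoreE.1 hemin).2.1.1
  · exact hmax ▸ (mem_tcoreE.1 hemax).2.1.2
  · exact ⟨times.min'_le _ (Finset.mem_image_of_mem _ he),
      times.le_max' _ (Finset.mem_image_of_mem _ he)⟩

end TemporalCore

theorem stmt14_general {V : Type*} (k : ℕ)
    (G : TemporalGraph V) (a b c d : ℕ)
    (hne1 : (tcoreE k G a b).Nonempty) (hne2 : (tcoreE k G c d).Nonempty)
    (hmin : (((tcoreE k G a b).image fun e => e.2.2).min' (hne1.image _)) =
            (((tcoreE k G c d).image fun e => e.2.2).min' (hne2.image _)))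
    (hmax : (((tcoreE k G a b).image fun e => e.2.2).max' (hne1.image _)) =
            (((tcoreE k G c d).image fun e => e.2.2).max' (hne2.image _))) :
    tcoreV k G a b = tcoreV k G c d ∧ tcoreE k G a b = tcoreE k G c d := by
  obtain ⟨hV₁, hE₁⟩ := tcore_eq_tcore_tightest hne1
  obtain ⟨hV₂, hE₂⟩ := tcore_eq_tcore_tightest hne2
  rw [hmin, hmax] at hV₁ hE₁
  exact ⟨hV₁.symm.trans hV₂, hE₁.symm.trans hE₂⟩

/-- A temporal `k`-core is uniquely identified by its tightest time
interval: if the temporal `k`-cores over `[a, b]` and `[c, d]` both have at least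
one temporal edge and their minimum and maximum edge timestamps agree, then the
two temporal `k`-cores are equal. -/
theorem stmt14 {V : Type*} [Fintype V] (k : ℕ) (hk : 1 ≤ k)
    (G : TemporalGraph V) (a b c d : ℕ) (hab : a ≤ b) (hcd : c ≤ d)
    (hne1 : (tcoreE k G a b).Nonempty) (hne2 : (tcoreE k G c d).Nonempty)
    (hmin : (((tcoreE k G a b).image fun e => e.2.2).min' (hne1.image _)) =
            (((tcoreE k G c d).image fun e => e.2.2).min' (hne2.image _)))
    (hmax : (((tcoreE k G a b).image fun e => e.2.2).max' (hne1.image _)) =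
            (((tcoreE k G c d).image fun e => e.2.2).max' (hne2.image _))) :
    tcoreV k G a b = tcoreV k G c d ∧ tcoreE k G a b = tcoreE k G c d :=
  stmt14_general k G a b c d hne1 hne2 hmin hmax
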